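/- arXiv:1401.7248 — 6 statements merged into one kernel-verified Lean document; each statement's English description precedes it below -/
import Mathlib

section
/- In any monoid, if an element j lies in the same two-sided principal ideal class (J-class) as the identity but is not a unit, then there exist elements x, y in the monoid with xy = 1 but yx ≠ 1. -/
/-- If an element `j` of a monoid is J-related to the identity (i.e. `MjM = M1M = M`)
but is not a unit, then there exist `x, y` with `x * y = 1` but `y * x ≠ 1`. -/
theorem jclass_of_one_not_unit {M : Type*} [Monoid M] (j : M)
    (hJ : {z : M | ∃ a b : M, z = a * j * b} = Set.univ)
    (hj : ¬ IsUnit j) :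
    ∃ x y : M, x * y = 1 ∧ y * x ≠ 1 := by
  have h1 : (1 : M) ∈ {z : M | ∃ a b : M, z = a * j * b} := by rw [hJ]; trivial
  obtain ⟨a, b, hab⟩ := h1
  by_contra hc
  push_neg at hc
  have h2 : a * (j * b) = 1 := by rw [← mul_assoc]; exact hab.symm
  have h3 : j * (b * a) = 1 := by
    have := hc a (j * b) h2
    rw [mul_assoc] at this; exact this
  have h4 : (b * a) * j = 1 := hc j (b * a) h3
  exact hj ⟨⟨j, b * a, h3, h4⟩, rfl⟩
end

section
/- If a monoid M contains elements x, y with xy = 1 but yx ≠ 1, then the submonoid generated by x and y is isomorphic to the bicyclic monoid (the monoid presented by generators p, q with the single relation pq = 1). -/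
structure Bicyclic where
  a : ℕ
  b : ℕ

namespace Bicyclic

instance : Mul Bicyclic :=
  ⟨fun x y => ⟨x.a + y.a - min x.b y.a, x.b + y.b - min x.b y.a⟩⟩

instance : One Bicyclic := ⟨⟨0, 0⟩⟩

@[simp] lemma mul_def (x y : Bicyclic) :
    x * y = ⟨x.a + y.a - min x.b y.a, x.b + y.b - min x.b y.a⟩ := rfl

@[simp] lemma one_def : (1 : Bicyclic) = ⟨0, 0⟩ := rfl

instance : Monoid Bicyclic where
  mul_assoc x y z := by cases x; cases y; cases z; simp only [mul_def]; congr 1 <;> omega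
  one_mul x := by cases x; simp
  mul_one x := by cases x; simp

end Bicyclic

section Aux

variable {M : Type*} [Monoid M] {x y : M}

lemma bic_pow_cancel (hxy : x * y = 1) : ∀ n, x ^ n * y ^ n = 1
  | 0 => by simp
  | n + 1 => by
    have : x ^ (n + 1) * y ^ (n + 1) = x ^ n * (x * y) * y ^ n := by
      rw [pow_succ, pow_succ']; rw [mul_assoc, mul_assoc, mul_assoc]
    rw [this, hxy, mul_one, bic_pow_cancel hxy n]

lemma bic_xy_le (hxy : x * y = 1) {b c : ℕ} (h : b ≤ c) :
    x ^ b * y ^ c = y ^ (c - b) := by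
  have hc : c = b + (c - b) := by omega
  rw [hc, pow_add, ← mul_assoc, bic_pow_cancel hxy, one_mul]
  congr 1; omega

lemma bic_xy_ge (hxy : x * y = 1) {b c : ℕ} (h : c ≤ b) :
    x ^ b * y ^ c = x ^ (b - c) := by
  conv_lhs => rw [← Nat.sub_add_cancel h, pow_add]
  rw [mul_assoc, bic_pow_cancel hxy, mul_one]

lemma bic_L1 (hxy : x * y = 1) (hyx : y * x ≠ 1) :
    ∀ i : ℕ, y ^ i * x ^ i = 1 → i = 0 := by
  intro i
  induction i with
  | zero => intro; rfl
  | succ n ih =>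
    intro h
    have key : y ^ n * x ^ n = 1 := by
      have : x * (y ^ (n + 1) * x ^ (n + 1)) * y = x * 1 * y := by rw [h]
      rw [mul_one, hxy] at this
      calc y ^ n * x ^ n = (x * y) * y ^ n * (x ^ n * (x * y)) := by rw [hxy]; simp
        _ = x * (y ^ (n + 1) * x ^ (n + 1)) * y := by
            rw [pow_succ', pow_succ]; simp only [mul_assoc]
        _ = 1 := this
    have hn := ih key
    subst hn
    simp only [zero_add, pow_one] at h
    exact absurd h hyx

lemma bic_L (hxy : x * y = 1) (hyx : y * x ≠ 1) {i j : ℕ}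
    (h : y ^ i * x ^ j = 1) : i = 0 ∧ j = 0 := by
  have hy : y ^ i = y ^ j := by
    calc y ^ i = y ^ i * (x ^ j * y ^ j) := by rw [bic_pow_cancel hxy, mul_one]
      _ = (y ^ i * x ^ j) * y ^ j := by rw [mul_assoc]
      _ = y ^ j := by rw [h, one_mul]
  have hj : j = 0 := bic_L1 hxy hyx j (by rw [← hy, h])
  subst hj
  rw [pow_zero, mul_one] at h
  have hx : x ^ i = 1 := by rw [← bic_pow_cancel hxy i, h, mul_one]
  exact ⟨bic_L1 hxy hyx i (by rw [h, hx, mul_one]), rfl⟩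

lemma bic_inj_half (hxy : x * y = 1) (hyx : y * x ≠ 1) {a b c d : ℕ}
    (hac : a ≤ c) (h : y ^ a * x ^ b = y ^ c * x ^ d) : a = c ∧ b = d := by
  have h1 : x ^ b = y ^ (c - a) * x ^ d := by
    calc x ^ b = (x ^ a * y ^ a) * x ^ b := by rw [bic_pow_cancel hxy, one_mul]
      _ = x ^ a * (y ^ c * x ^ d) := by rw [mul_assoc, h]
      _ = (x ^ a * y ^ c) * x ^ d := by rw [mul_assoc]
      _ = y ^ (c - a) * x ^ d := by rw [bic_xy_le hxy hac]
  rcases le_total b d with hbd | hdb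
  · have h2 : y ^ (c - a) * x ^ (d - b) = 1 := by
      calc y ^ (c - a) * x ^ (d - b) = y ^ (c - a) * (x ^ d * y ^ b) := by
            rw [bic_xy_ge hxy hbd]
        _ = (y ^ (c - a) * x ^ d) * y ^ b := by rw [mul_assoc]
        _ = x ^ b * y ^ b := by rw [← h1]
        _ = 1 := bic_pow_cancel hxy b
    have := bic_L hxy hyx h2
    omega
  · have h2 : x ^ (b - d) = y ^ (c - a) := by
      calc x ^ (b - d) = x ^ b * y ^ d := (bic_xy_ge hxy hdb).symm
        _ = y ^ (c - a) * (x ^ d * y ^ d) := by rw [h1, mul_assoc]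
        _ = y ^ (c - a) := by rw [bic_pow_cancel hxy, mul_one]
    have h3 : x ^ ((c - a) + (b - d)) = 1 := by
      rw [pow_add, h2]; exact bic_pow_cancel hxy _
    have := bic_L hxy hyx (i := 0) (j := (c - a) + (b - d)) (by rw [pow_zero, one_mul, h3])
    omega

end Aux

/-- If a monoid contains elements `x, y` with `x * y = 1` but `y * x ≠ 1`, then the
submonoid generated by `x` and `y` is isomorphic to the bicyclic monoid. -/
theorem closure_iso_bicyclic {M : Type*} [Monoid M] (x y : M)
    (hxy : x * y = 1) (hyx : y * x ≠ 1) :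
    Nonempty ((Submonoid.closure ({x, y} : Set M)) ≃* Bicyclic) := by
  let f : Bicyclic →* M :=
    { toFun := fun z => y ^ z.a * x ^ z.b
      map_one' := by simp
      map_mul' := by
        rintro ⟨a, b⟩ ⟨c, d⟩
        simp only [Bicyclic.mul_def]
        rcases le_total b c with hbc | hcb
        · rw [min_eq_left hbc]
          calc y ^ (a + c - b) * x ^ (b + d - b) = y ^ a * y ^ (c - b) * x ^ d := by
                rw [← pow_add]; congr 2 <;> omega
            _ = y ^ a * (x ^ b * y ^ c) * x ^ d := by rw [bic_xy_le hxy hbc]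
            _ = y ^ a * x ^ b * (y ^ c * x ^ d) := by simp only [mul_assoc]
        · rw [min_eq_right hcb]
          calc y ^ (a + c - c) * x ^ (b + d - c) = y ^ a * (x ^ (b - c) * x ^ d) := by
                rw [← pow_add]; congr 2 <;> omega
            _ = y ^ a * ((x ^ b * y ^ c) * x ^ d) := by rw [bic_xy_ge hxy hcb]
            _ = y ^ a * x ^ b * (y ^ c * x ^ d) := by simp only [mul_assoc]
    }
  have hinj : Function.Injective f := by
    rintro ⟨a, b⟩ ⟨c, d⟩ h
    simp only [f, MonoidHom.coe_mk, OneHom.coe_mk] at h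
    rcases le_total a c with hac | hca
    · obtain ⟨h1, h2⟩ := bic_inj_half hxy hyx hac h
      simp [h1, h2]
    · obtain ⟨h1, h2⟩ := bic_inj_half hxy hyx hca h.symm
      simp [h1, h2]
  have hrange : MonoidHom.mrange f = Submonoid.closure ({x, y} : Set M) := by
    apply le_antisymm
    · rintro _ ⟨⟨a, b⟩, rfl⟩
      have hx : x ∈ Submonoid.closure ({x, y} : Set M) :=
        Submonoid.subset_closure (by simp)
      have hy : y ∈ Submonoid.closure ({x, y} : Set M) :=
        Submonoid.subset_closure (by simp)
      exact mul_mem (pow_mem hy a) (pow_mem hx b)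
    · rw [Submonoid.closure_le]
      rintro z (rfl | rfl)
      · exact ⟨⟨0, 1⟩, by simp [f]⟩
      · exact ⟨⟨1, 0⟩, by simp [f]⟩
  have hinj' : Function.Injective (MonoidHom.mrangeRestrict f) := fun a b h =>
    hinj (congrArg Subtype.val h)
  have e : Bicyclic ≃* MonoidHom.mrange f :=
    MulEquiv.ofBijective (MonoidHom.mrangeRestrict f)
      ⟨hinj', MonoidHom.mrangeRestrict_surjective f⟩
  exact ⟨(e.trans (MulEquiv.submonoidCongr hrange)).symm⟩
end

section
/- Every proper (non-injective) monoid-homomorphic image of the bicyclic monoid is a cyclic group. -/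
/-- Every proper (surjective, non-injective) monoid-homomorphic image of the bicyclic
monoid is a cyclic group: every element has a two-sided inverse, and there is an element
`g` such that every element is a (positive or negative) power of `g`. -/
theorem bicyclic_proper_quotient_cyclic_group {N : Type*} [Monoid N]
    (f : Bicyclic →* N) (hsurj : Function.Surjective f)
    (hinj : ¬ Function.Injective f) :
    ∃ inv : N → N, (∀ x : N, x * inv x = 1 ∧ inv x * x = 1) ∧
      ∃ g : N, ∀ x : N, ∃ k : ℕ, x = g ^ k ∨ x = (inv g) ^ k := by
  classical
  set Q : N := f ⟨1, 0⟩ with hQdef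
  set P : N := f ⟨0, 1⟩ with hPdef
  have hPQ : P * Q = 1 := by
    rw [hPdef, hQdef, ← f.map_mul]
    have : (⟨0, 1⟩ : Bicyclic) * ⟨1, 0⟩ = 1 := by
      simp only [Bicyclic.mul_def, Bicyclic.one_def]
      congr 1 <;> omega
    rw [this, f.map_one]
  -- A nontrivial element of the kernel
  have key : ∃ u v : ℕ, ¬(u = 0 ∧ v = 0) ∧ f ⟨u, v⟩ = 1 := by
    rw [Function.not_injective_iff] at hinj
    obtain ⟨x, y, hfxy, hxy⟩ := hinj
    obtain ⟨a, b⟩ := x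
    obtain ⟨c, d⟩ := y
    have conj : ∀ s t u v : ℕ,
        f ⟨u, v⟩ = f ⟨s, t⟩ → f ((⟨0, s⟩ : Bicyclic) * ⟨u, v⟩ * ⟨t, 0⟩) = 1 := by
      intro s t u v h
      have h1 : (⟨0, s⟩ : Bicyclic) * ⟨s, t⟩ * ⟨t, 0⟩ = 1 := by
        simp only [Bicyclic.mul_def, Bicyclic.one_def]
        congr 1 <;> omega
      calc f ((⟨0, s⟩ : Bicyclic) * ⟨u, v⟩ * ⟨t, 0⟩)
          = f ⟨0, s⟩ * f ⟨u, v⟩ * f ⟨t, 0⟩ := by rw [f.map_mul, f.map_mul]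
        _ = f ⟨0, s⟩ * f ⟨s, t⟩ * f ⟨t, 0⟩ := by rw [h]
        _ = f ((⟨0, s⟩ : Bicyclic) * ⟨s, t⟩ * ⟨t, 0⟩) := by rw [f.map_mul, f.map_mul]
        _ = 1 := by rw [h1, f.map_one]
    have hz := conj a b c d hfxy.symm
    have hw := conj c d a b hfxy
    by_cases hcz : (⟨0, a⟩ : Bicyclic) * ⟨c, d⟩ * ⟨b, 0⟩ = 1
    · by_cases hcw : (⟨0, c⟩ : Bicyclic) * ⟨a, b⟩ * ⟨d, 0⟩ = 1
      · exfalso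
        simp only [Bicyclic.mul_def, Bicyclic.one_def, Bicyclic.mk.injEq] at hcz hcw
        apply hxy
        have : a = c ∧ b = d := by omega
        rw [this.1, this.2]
      · refine ⟨_, _, ?_, hw⟩
        intro h
        exact hcw (by
          simp only [Bicyclic.mul_def, Bicyclic.one_def, Bicyclic.mk.injEq] at h ⊢
          omega)
    · refine ⟨_, _, ?_, hz⟩
      intro h
      exact hcz (by
        simp only [Bicyclic.mul_def, Bicyclic.one_def, Bicyclic.mk.injEq] at h ⊢
        omega)
  -- f ⟨1,1⟩ = 1, i.e. Q * P = 1
  have hE : f ⟨1, 1⟩ = 1 := by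
    obtain ⟨u, v, huv, hker⟩ := key
    rcases Nat.eq_zero_or_pos u with hu | hu
    · have habs : (⟨u, v⟩ : Bicyclic) * ⟨1, 1⟩ = ⟨u, v⟩ := by
        simp only [Bicyclic.mul_def]
        congr 1 <;> omega
      have := congrArg f habs
      rw [f.map_mul, hker, one_mul] at this
      exact this
    · have habs : (⟨1, 1⟩ : Bicyclic) * ⟨u, v⟩ = ⟨u, v⟩ := by
        simp only [Bicyclic.mul_def]
        congr 1 <;> omega
      have := congrArg f habs
      rw [f.map_mul, hker, mul_one] at this
      exact this
  have hQP : Q * P = 1 := by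
    rw [hQdef, hPdef, ← f.map_mul]
    have : (⟨1, 0⟩ : Bicyclic) * ⟨0, 1⟩ = ⟨1, 1⟩ := by
      simp only [Bicyclic.mul_def]
      congr 1 <;> omega
    rw [this, hE]
  -- f ⟨a, b⟩ = Q ^ a * P ^ b
  have powQ : ∀ a : ℕ, f ⟨a, 0⟩ = Q ^ a := by
    intro a
    induction a with
    | zero => simpa using f.map_one
    | succ n ih =>
      have : (⟨n, 0⟩ : Bicyclic) * ⟨1, 0⟩ = ⟨n + 1, 0⟩ := by
        simp only [Bicyclic.mul_def]
        congr 1 <;> omega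
      rw [← this, f.map_mul, ih, ← hQdef, pow_succ]
  have powP : ∀ b : ℕ, f ⟨0, b⟩ = P ^ b := by
    intro b
    induction b with
    | zero => simpa using f.map_one
    | succ n ih =>
      have : (⟨0, n⟩ : Bicyclic) * ⟨0, 1⟩ = ⟨0, n + 1⟩ := by
        simp only [Bicyclic.mul_def]
        congr 1 <;> omega
      rw [← this, f.map_mul, ih, ← hPdef, pow_succ]
  have fval : ∀ a b : ℕ, f ⟨a, b⟩ = Q ^ a * P ^ b := by
    intro a b
    have : (⟨a, 0⟩ : Bicyclic) * ⟨0, b⟩ = ⟨a, b⟩ := by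
      simp only [Bicyclic.mul_def]
      congr 1 <;> omega
    rw [← this, f.map_mul, powQ, powP]
  have cancelQP : ∀ n : ℕ, Q ^ n * P ^ n = 1 := by
    intro n
    induction n with
    | zero => simp
    | succ m ih =>
      rw [pow_succ, pow_succ' P, mul_assoc, ← mul_assoc Q, hQP, one_mul, ih]
  have cancelPQ : ∀ n : ℕ, P ^ n * Q ^ n = 1 := by
    intro n
    induction n with
    | zero => simp
    | succ m ih =>
      rw [pow_succ, pow_succ' Q, mul_assoc, ← mul_assoc P, hPQ, one_mul, ih]
  have mix : ∀ a b : ℕ, (Q ^ a * P ^ b) * (Q ^ b * P ^ a) = 1 := by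
    intro a b
    rw [mul_assoc, ← mul_assoc (P ^ b), cancelPQ, one_mul, cancelQP]
  -- inverse function facts
  have hinv1 : ∀ x : N,
      x * f ⟨(Classical.choose (hsurj x)).b, (Classical.choose (hsurj x)).a⟩ = 1 := by
    intro x
    have hspec : f (Classical.choose (hsurj x)) = x := Classical.choose_spec (hsurj x)
    set c : Bicyclic := Classical.choose (hsurj x) with hc
    have h2 : Q ^ c.a * P ^ c.b = x := by rw [← fval]; exact hspec
    rw [← h2, fval]
    exact mix c.a c.b
  have hinv2 : ∀ x : N,
      f ⟨(Classical.choose (hsurj x)).b, (Classical.choose (hsurj x)).a⟩ * x = 1 := by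
    intro x
    have hspec : f (Classical.choose (hsurj x)) = x := Classical.choose_spec (hsurj x)
    set c : Bicyclic := Classical.choose (hsurj x) with hc
    have h2 : Q ^ c.a * P ^ c.b = x := by rw [← fval]; exact hspec
    rw [← h2, fval]
    exact mix c.b c.a
  have hinvQ : f ⟨(Classical.choose (hsurj Q)).b, (Classical.choose (hsurj Q)).a⟩ = P := by
    have h1 := hinv1 Q
    set c : Bicyclic := Classical.choose (hsurj Q) with hc
    calc f ⟨c.b, c.a⟩ = (P * Q) * f ⟨c.b, c.a⟩ := by rw [hPQ, one_mul]
      _ = P * (Q * f ⟨c.b, c.a⟩) := by rw [mul_assoc]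
      _ = P := by rw [h1, mul_one]
  have main : ∀ x : N, ∃ k : ℕ, x = Q ^ k ∨ x = P ^ k := by
    intro x
    obtain ⟨z, hz⟩ := hsurj x
    have hx : Q ^ z.a * P ^ z.b = x := by rw [← fval]; exact hz
    rcases le_total z.b z.a with h | h
    · refine ⟨z.a - z.b, Or.inl ?_⟩
      rw [← hx]
      have hh : z.a = (z.a - z.b) + z.b := by omega
      rw [hh, pow_add, mul_assoc, cancelQP, mul_one]
      congr 1
      omega
    · refine ⟨z.b - z.a, Or.inr ?_⟩
      rw [← hx]
      have hh : z.b = z.a + (z.b - z.a) := by omega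
      rw [hh, pow_add, ← mul_assoc, cancelQP, one_mul]
      congr 1
      omega
  refine ⟨fun x => f ⟨(Classical.choose (hsurj x)).b, (Classical.choose (hsurj x)).a⟩,
    fun x => ⟨hinv1 x, hinv2 x⟩, Q, fun x => ?_⟩
  obtain ⟨k, hk⟩ := main x
  rcases hk with hk | hk
  · exact ⟨k, Or.inl hk⟩
  · refine ⟨k, Or.inr ?_⟩
    show x = (f ⟨(Classical.choose (hsurj Q)).b, (Classical.choose (hsurj Q)).a⟩) ^ k
    rw [hinvQ]
    exact hk
end

section
/- Let M be a monoid in which every D-class contains only finitely many L-classes. Then M contains no submonoid isomorphic to the bicyclic monoid; equivalently, the J-class of the identity equals the group of units. -/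
/-- `x L y` iff `Mx = My`. -/
def LRel {M : Type*} [Monoid M] (x y : M) : Prop :=
  {z : M | ∃ m : M, z = m * x} = {z : M | ∃ m : M, z = m * y}

/-- `x R y` iff `xM = yM`. -/
def RRel {M : Type*} [Monoid M] (x y : M) : Prop :=
  {z : M | ∃ m : M, z = x * m} = {z : M | ∃ m : M, z = y * m}

/-- `x D y` iff there is `z` with `x L z` and `z R y`. -/
def DRel {M : Type*} [Monoid M] (x y : M) : Prop :=
  ∃ z : M, LRel x z ∧ RRel z y

lemma key_lemma {M : Type*} [Monoid M]
    (hfin : {s : Set M | ∃ y : M, DRel (1 : M) y ∧ s = {w : M | LRel y w}}.Finite)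
    {a c : M} (h : a * c = 1) : c * a = 1 := by
  by_contra hca
  have hpow : ∀ n : ℕ, a ^ n * c ^ n = 1 := by
    intro n
    induction n with
    | zero => simp
    | succ n ih =>
      rw [pow_succ, pow_succ', mul_assoc, ← mul_assoc a c, h, one_mul, ih]
  -- each a^n is D-related to 1
  have hD : ∀ n : ℕ, DRel (1 : M) (a ^ n) := by
    intro n
    refine ⟨1, rfl, ?_⟩
    unfold RRel
    ext z
    constructor
    · rintro ⟨m, rfl⟩
      exact ⟨c ^ n * m, by rw [← mul_assoc, hpow, one_mul]⟩
    · rintro ⟨m, rfl⟩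
      exact ⟨a ^ n * m, by rw [one_mul]⟩
  -- the L-class map is injective
  set F : ℕ → Set M := fun n => {w : M | LRel (a ^ n) w} with hF
  have hmem : ∀ n, F n ∈ {s : Set M | ∃ y : M, DRel (1 : M) y ∧ s = {w : M | LRel y w}} :=
    fun n => ⟨a ^ n, hD n, rfl⟩
  have hkey : ∀ m n : ℕ, m < n → LRel (a ^ m) (a ^ n) → False := by
    intro m n hmn hL
    have hmem' : a ^ m ∈ {z : M | ∃ u : M, z = u * a ^ n} := by
      rw [← hL]; exact ⟨1, (one_mul _).symm⟩
    obtain ⟨u, hu⟩ := hmem'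
    obtain ⟨k, hk1, hkmn⟩ : ∃ k, 1 ≤ k ∧ n = k + m := ⟨n - m, by omega, by omega⟩
    have hn : a ^ n = a ^ k * a ^ m := by rw [hkmn, pow_add]
    have hua : u * a ^ k = 1 := by
      have h5 : a ^ m * c ^ m = u * a ^ k * (a ^ m * c ^ m) := by
        conv_lhs => rw [hu, hn]
        rw [mul_assoc, mul_assoc, ← mul_assoc]
      rw [hpow, mul_one] at h5
      exact h5.symm
    have hck : c ^ k = u := by
      have : u * (a ^ k * c ^ k) = u := by rw [hpow, mul_one]
      rw [← mul_assoc, hua, one_mul] at this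
      exact this
    have hcka : c ^ k * a ^ k = 1 := by rw [hck]; exact hua
    -- derive c * a = 1
    obtain ⟨j, rfl⟩ : ∃ j, j + 1 = k := ⟨k - 1, by omega⟩
    have hva : (c ^ (j + 1) * a ^ j) * a = 1 := by
      rw [mul_assoc, ← pow_succ]; exact hcka
    have hcv : c = c ^ (j + 1) * a ^ j := by
      have : (c ^ (j + 1) * a ^ j) * (a * c) = c ^ (j + 1) * a ^ j := by rw [h, mul_one]
      rw [← mul_assoc, hva, one_mul] at this
      exact this
    exact hca (by rw [hcv]; exact hva)
  have hinj : Function.Injective F := by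
    intro m n hFeq
    by_contra hne
    rcases Nat.lt_or_ge m n with hlt | hge
    · apply hkey m n hlt
      have : a ^ n ∈ F n := Set.mem_setOf.mpr rfl
      rw [← hFeq] at this
      exact this
    · have hlt : n < m := by omega
      apply hkey n m hlt
      have : a ^ m ∈ F m := Set.mem_setOf.mpr rfl
      rw [hFeq] at this
      exact this
  exact Set.infinite_of_injective_forall_mem hinj hmem hfin

/-- If every D-class of a monoid `M` contains only finitely many L-classes, then `M`
contains no submonoid isomorphic to the bicyclic monoid; equivalently, the J-class of
the identity equals the group of units. -/
theorem finitely_many_Lclasses_no_bicyclic {M : Type*} [Monoid M]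
    (hfin : ∀ x : M, {s : Set M | ∃ y : M, DRel x y ∧ s = {w : M | LRel y w}}.Finite) :
    (¬ ∃ f : Bicyclic →* M, Function.Injective f) ∧
    ({x : M | {z : M | ∃ a b : M, z = a * x * b} = Set.univ} = {x : M | IsUnit x}) := by
  have key : ∀ a c : M, a * c = 1 → c * a = 1 := fun a c h => key_lemma (hfin 1) h
  constructor
  · rintro ⟨f, hf⟩
    have hmul : (⟨0, 1⟩ : Bicyclic) * ⟨1, 0⟩ = 1 := by
      simp [Bicyclic.mul_def]
    have h1 : f ⟨0, 1⟩ * f ⟨1, 0⟩ = 1 := by rw [← map_mul, hmul, map_one]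
    have h2 : f ⟨1, 0⟩ * f ⟨0, 1⟩ = 1 := key _ _ h1
    have h3 : f ((⟨1, 0⟩ : Bicyclic) * ⟨0, 1⟩) = f 1 := by
      rw [map_mul, h2, map_one]
    have h4 := hf h3
    have : (⟨1, 0⟩ : Bicyclic) * ⟨0, 1⟩ = ⟨1, 1⟩ := by simp [Bicyclic.mul_def]
    rw [this] at h4
    simp at h4
  · ext x
    simp only [Set.mem_setOf_eq]
    constructor
    · intro hx
      have h1 : (1 : M) ∈ {z : M | ∃ a b : M, z = a * x * b} := hx ▸ Set.mem_univ 1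
      obtain ⟨a, b, hab⟩ := h1
      have hab' : a * (x * b) = 1 := by rw [← mul_assoc]; exact hab.symm
      have h2 : (x * b) * a = 1 := key _ _ hab'
      have h3 : x * (b * a) = 1 := by rw [← mul_assoc]; exact h2
      have hab'' : (a * x) * b = 1 := hab.symm
      have h4 : b * (a * x) = 1 := key _ _ hab''
      have h5 : (b * a) * x = 1 := by rw [mul_assoc]; exact h4
      exact ⟨⟨x, b * a, h3, h5⟩, rfl⟩
    · rintro ⟨u, rfl⟩
      ext z
      simp only [Set.mem_setOf_eq, Set.mem_univ, iff_true]
      exact ⟨z * ↑u⁻¹, 1, by simp [mul_assoc]⟩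
end

section
/- For any monoid M and H-class H of M, the set of permutations of H realized by right translation by elements of M, namely {σ ∈ Sym(H) : ∃ m ∈ M, ∀ h ∈ H, hσ = hm}, is a subgroup of the symmetric group on H (the right Schützenberger group of H). -/
/-- Green's H-relation: `x H y` iff `Mx = My` and `xM = yM`. -/
def HRel {M : Type*} [Monoid M] (x y : M) : Prop :=
  ({z : M | ∃ m : M, z = m * x} = {z : M | ∃ m : M, z = m * y}) ∧
  ({z : M | ∃ m : M, z = x * m} = {z : M | ∃ m : M, z = y * m})

lemma hrel_iff {M : Type*} [Monoid M] {x y : M} :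
    HRel x y ↔ (∃ p, x = p * y) ∧ (∃ q, y = q * x) ∧ (∃ s, x = y * s) ∧ (∃ t, y = x * t) := by
  constructor
  · rintro ⟨hL, hR⟩
    have h1 : x ∈ {z : M | ∃ m : M, z = m * y} := hL ▸ ⟨1, (one_mul x).symm⟩
    have h2 : y ∈ {z : M | ∃ m : M, z = m * x} := hL.symm ▸ ⟨1, (one_mul y).symm⟩
    have h3 : x ∈ {z : M | ∃ m : M, z = y * m} := hR ▸ ⟨1, (mul_one x).symm⟩
    have h4 : y ∈ {z : M | ∃ m : M, z = x * m} := hR.symm ▸ ⟨1, (mul_one y).symm⟩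
    exact ⟨h1, h2, h3, h4⟩
  · rintro ⟨⟨p, hp⟩, ⟨q, hq⟩, ⟨s, hs⟩, ⟨t, ht⟩⟩
    constructor <;> ext z <;> simp only [Set.mem_setOf_eq] <;>
      constructor <;> rintro ⟨m, rfl⟩
    · exact ⟨m * p, by rw [hp, mul_assoc]⟩
    · exact ⟨m * q, by rw [hq, mul_assoc]⟩
    · exact ⟨s * m, by rw [hs, mul_assoc]⟩
    · exact ⟨t * m, by rw [ht, mul_assoc]⟩

/-- For any monoid `M` and H-class `H` (here, the H-class of an element `a`), the set of
permutations of `H` realized by right translation by elements of `M` is a subgroup of the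
symmetric group on `H`: the right Schützenberger group of `H`. -/
theorem schutzenberger_subgroup {M : Type*} [Monoid M] (a : M) :
    ∃ S : Subgroup (Equiv.Perm {x : M // HRel x a}),
      ∀ σ : Equiv.Perm {x : M // HRel x a},
        σ ∈ S ↔ ∃ m : M, ∀ h : {x : M // HRel x a}, ((σ h : {x : M // HRel x a}) : M) = (h : M) * m := by
  have hrefl : HRel a a := ⟨rfl, rfl⟩
  refine ⟨{
    carrier := {σ | ∃ m : M, ∀ h : {x : M // HRel x a}, ((σ h : {x : M // HRel x a}) : M) = (h : M) * m}
    one_mem' := ⟨1, fun h => by simp⟩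
    mul_mem' := by
      rintro σ τ ⟨m, hm⟩ ⟨n, hn⟩
      exact ⟨n * m, fun h => by
        simp only [Equiv.Perm.mul_apply]
        rw [hm, hn, mul_assoc]⟩
    inv_mem' := by
      rintro σ ⟨m, hm⟩
      -- b = σ⁻¹ a
      set b : {x : M // HRel x a} := σ.symm ⟨a, hrefl⟩ with hb
      have hbm : (b : M) * m = a := by
        have := hm b
        rw [hb, Equiv.apply_symm_apply] at this
        exact this.symm
      obtain ⟨⟨pb, hpb⟩, ⟨qb, hqb⟩, ⟨m', hm'⟩, _⟩ := hrel_iff.mp b.2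
      refine ⟨m', fun h => ?_⟩
      obtain ⟨⟨u, hu⟩, ⟨v, hv⟩, ⟨s, hs⟩, ⟨t, ht⟩⟩ := hrel_iff.mp h.2
      -- h * m' = u * b
      have key : (h : M) * m' = u * (b : M) := by rw [hu, hm', mul_assoc]
      -- v * u * b = b
      have hvub : v * (u * (b : M)) = (b : M) := by
        rw [hm', ← mul_assoc u, ← hu, ← mul_assoc, ← hv]
      have hmem : HRel ((h : M) * m') a := by
        rw [key]
        refine hrel_iff.mpr ⟨⟨u * pb, by rw [hpb, mul_assoc]⟩,
          ⟨qb * v, by rw [mul_assoc, hvub, ← hqb]⟩,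
          ⟨s * m', by rw [← key, hs, mul_assoc]⟩,
          ⟨m * t, ?_⟩⟩
        have : u * (b : M) * m = (h : M) := by rw [mul_assoc, hbm, ← hu]
        rw [← mul_assoc, this, ← ht]
      have happ : σ ⟨(h : M) * m', hmem⟩ = h := by
        apply Subtype.ext
        have := hm ⟨(h : M) * m', hmem⟩
        rw [this]
        show (h : M) * m' * m = (h : M)
        rw [key, mul_assoc, hbm, ← hu]
      have : σ.symm h = ⟨(h : M) * m', hmem⟩ :=
        (Equiv.symm_apply_eq σ).mpr happ.symm
      show ((σ⁻¹ h : {x : M // HRel x a}) : M) = (h : M) * m'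
      rw [show (σ⁻¹ : Equiv.Perm _) h = σ.symm h from rfl, this]
  }, fun σ => Iff.rfl⟩
end

section
/- If H is an H-class of a monoid M that is a subgroup of M (i.e., contains an idempotent and is closed under multiplication), then the right Schützenberger group of H is isomorphic to H. -/
theorem HRel.symm' {M : Type*} [Monoid M] {x y : M} (h : HRel x y) : HRel y x :=
  ⟨h.1.symm, h.2.symm⟩

theorem HRel.trans' {M : Type*} [Monoid M] {x y z : M} (h1 : HRel x y) (h2 : HRel y z) :
    HRel x z := ⟨h1.1.trans h2.1, h1.2.trans h2.2⟩

theorem HRel.exists_left {M : Type*} [Monoid M] {x y : M} (h : HRel x y) :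
    ∃ m, x = m * y := by
  have hx : x ∈ {z : M | ∃ m : M, z = m * x} := ⟨1, (one_mul x).symm⟩
  rw [h.1] at hx
  exact hx

theorem HRel.exists_right {M : Type*} [Monoid M] {x y : M} (h : HRel x y) :
    ∃ m, x = y * m := by
  have hx : x ∈ {z : M | ∃ m : M, z = x * m} := ⟨1, (mul_one x).symm⟩
  rw [h.2] at hx
  exact hx

/-- If an H-class `H` of a monoid is a subgroup of the monoid (contains an idempotent
and is closed under multiplication), then the right Schützenberger group of `H` is
isomorphic to `H` itself. -/
theorem schutzenberger_of_group_Hclass {M : Type*} [Monoid M] (a : M)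
    (hidem : ∃ e : M, HRel e a ∧ e * e = e)
    (hmul : ∀ x y : M, HRel x a → HRel y a → HRel (x * y) a)
    (S : Subgroup (Equiv.Perm {x : M // HRel x a}))
    (hS : ∀ σ : Equiv.Perm {x : M // HRel x a},
      σ ∈ S ↔ ∃ m : M, ∀ h : {x : M // HRel x a}, ((σ h : {x : M // HRel x a}) : M) = (h : M) * m) :
    ∃ φ : {x : M // HRel x a} ≃ S,
      ∀ x y : {x : M // HRel x a},
        φ ⟨(x : M) * (y : M), hmul x y x.2 y.2⟩ = φ x * φ y := by
  classical
  obtain ⟨e, hea, hee⟩ := hidem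
  -- `e` is a two-sided identity on the H-class
  have hre : ∀ x : M, HRel x a → x * e = x := by
    intro x hx
    obtain ⟨m, hm⟩ := HRel.exists_left (hx.trans' hea.symm')
    rw [hm, mul_assoc, hee]
  have hle : ∀ x : M, HRel x a → e * x = x := by
    intro x hx
    obtain ⟨m, hm⟩ := HRel.exists_right (hx.trans' hea.symm')
    rw [hm, ← mul_assoc, hee]
  -- uniqueness of inverses
  have huniq : ∀ b x c : M, HRel b a → HRel c a → b * x = e → x * c = e → b = c := by
    intro b x c hb hc hbx hxc
    calc b = b * e := (hre b hb).symm
      _ = b * (x * c) := by rw [hxc]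
      _ = (b * x) * c := (mul_assoc _ _ _).symm
      _ = e * c := by rw [hbx]
      _ = c := hle c hc
  -- existence of inverses inside the H-class
  have hinvex : ∀ x : M, HRel x a → ∃ x', HRel x' a ∧ x * x' = e ∧ x' * x = e := by
    intro x hx
    have hxe : HRel x e := hx.trans' hea.symm'
    obtain ⟨u, hu⟩ := HRel.exists_right hxe.symm'
    obtain ⟨v, hv⟩ := HRel.exists_left hxe.symm'
    have hxc : x * (e * u * e) = e := by
      rw [← mul_assoc, ← mul_assoc, hre x hx, ← hu, hee]
    have hbx : (e * v * e) * x = e := by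
      rw [mul_assoc, hle x hx, mul_assoc, ← hv, hee]
    have hbc : e * v * e = e * u * e := by
      calc e * v * e = (e * v * e) * e := by rw [mul_assoc (e * v) e e, hee]
        _ = (e * v * e) * (x * (e * u * e)) := by rw [hxc]
        _ = ((e * v * e) * x) * (e * u * e) := (mul_assoc _ _ _).symm
        _ = e * (e * u * e) := by rw [hbx]
        _ = e * u * e := by rw [← mul_assoc, ← mul_assoc, hee]
    have hcx : (e * u * e) * x = e := by rw [← hbc]; exact hbx
    -- `e * u * e` is in the H-class
    have hce : HRel (e * u * e) e := by
      constructor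
      · ext z
        constructor
        · rintro ⟨m, hm⟩
          exact ⟨m * (e * u), by rw [hm, ← mul_assoc]⟩
        · rintro ⟨m, hm⟩
          exact ⟨m * x, by conv_lhs => rw [hm, ← hxc, ← mul_assoc]⟩
      · ext z
        constructor
        · rintro ⟨m, hm⟩
          exact ⟨u * e * m, by rw [hm]; simp only [mul_assoc]⟩
        · rintro ⟨m, hm⟩
          exact ⟨x * m, by conv_lhs => rw [hm, ← hcx, mul_assoc]⟩
    exact ⟨e * u * e, hce.trans' hea, hxc, hcx⟩
  have he' : HRel e a := hea
  let e' : {x : M // HRel x a} := ⟨e, he'⟩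
  let inv : {x : M // HRel x a} → {x : M // HRel x a} := fun x => ⟨(hinvex x x.2).choose, (hinvex x x.2).choose_spec.1⟩
  have hinv1 : ∀ x : {x : M // HRel x a}, (x : M) * (inv x : M) = e := fun x => (hinvex x x.2).choose_spec.2.1
  have hinv2 : ∀ x : {x : M // HRel x a}, (inv x : M) * (x : M) = e := fun x => (hinvex x x.2).choose_spec.2.2
  have hinv_inv : ∀ x : {x : M // HRel x a}, inv (inv x) = x := by
    intro x
    exact Subtype.ext
      (huniq x (inv x) (inv (inv x)) x.2 (inv (inv x)).2 (hinv1 x) (hinv1 (inv x))).symm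
  -- translation permutations
  let toPerm : {x : M // HRel x a} → Equiv.Perm {x : M // HRel x a} := fun x =>
    { toFun := fun h => ⟨(h : M) * (x : M), hmul _ _ h.2 x.2⟩
      invFun := fun h => ⟨(h : M) * (inv x : M), hmul _ _ h.2 (inv x).2⟩
      left_inv := fun h => Subtype.ext (by
        show ((h : M) * x) * (inv x : M) = h
        rw [mul_assoc, hinv1, hre _ h.2])
      right_inv := fun h => Subtype.ext (by
        show ((h : M) * (inv x : M)) * (x : M) = h
        rw [mul_assoc, hinv2, hre _ h.2]) }
  have htoPerm : ∀ x : {x : M // HRel x a}, ∀ h : {x : M // HRel x a}, ((toPerm x h : {x : M // HRel x a}) : M) = (h : M) * (x : M) := fun _ _ => rfl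
  let ψ : {x : M // HRel x a} → S := fun x => ⟨toPerm (inv x), (hS (toPerm (inv x))).2 ⟨(inv x : M), fun h => rfl⟩⟩
  have hψinj : Function.Injective ψ := by
    intro x y hxy
    have h1 : toPerm (inv x) = toPerm (inv y) := Subtype.ext_iff.mp hxy
    have h2 : (e : M) * (inv x : M) = (e : M) * (inv y : M) := by
      have := congrArg (fun σ : Equiv.Perm {x : M // HRel x a} => ((σ e' : {x : M // HRel x a}) : M)) h1
      simpa [htoPerm] using this
    have h3 : inv x = inv y := Subtype.ext (by
      rw [hle _ (inv x).2, hle _ (inv y).2] at h2; exact h2)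
    rw [← hinv_inv x, ← hinv_inv y, h3]
  have hψsurj : Function.Surjective ψ := by
    intro σ
    obtain ⟨m, hm⟩ := (hS σ).1 σ.2
    refine ⟨inv (σ.1 e'), Subtype.ext (Equiv.ext fun h => Subtype.ext ?_)⟩
    show ((toPerm (inv (inv (σ.1 e'))) h : {x : M // HRel x a}) : M) = ((σ.1 h : {x : M // HRel x a}) : M)
    rw [hinv_inv, htoPerm, hm h, hm e']
    rw [← mul_assoc, hre _ h.2]
  refine ⟨Equiv.ofBijective ψ ⟨hψinj, hψsurj⟩, ?_⟩
  intro x y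
  show ψ ⟨(x : M) * (y : M), hmul x y x.2 y.2⟩ = ψ x * ψ y
  apply Subtype.ext
  apply Equiv.ext
  intro h
  apply Subtype.ext
  set z : {x : M // HRel x a} := ⟨(x : M) * (y : M), hmul x y x.2 y.2⟩ with hz
  have hkey : (inv z : M) = (inv y : M) * (inv x : M) := by
    refine (huniq ((inv y : M) * (inv x : M)) (z : M) (inv z : M)
      (hmul _ _ (inv y).2 (inv x).2) (inv z).2 ?_ (hinv1 z)).symm
    show ((inv y : M) * (inv x : M)) * ((x : M) * (y : M)) = e
    rw [mul_assoc, ← mul_assoc (inv x : M), hinv2 x, hle _ y.2, hinv2 y]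
  show ((h : M) * (inv z : M)) = (((h : M) * (inv y : M)) * (inv x : M))
  rw [hkey, mul_assoc]
end
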